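/- Let L be a timed language, K ∈ ℕ, and u, v timed words with u ≈^{L,K} v. Let a ∈ Σ, t_u ∈ ℝ≥0, and let t'_v be the unique entry of the one-element timestamp τ_{u→v}(t_u). Set u1 = u(t_u·a) and v2 = v(t'_v·a). Then c^K(u1) ≡^K c^K(v2) and τ_{u1→v2}(u1^{-1}L) = v2^{-1}L; in particular u1 ≈^{L,K} v2. -/

import Mathlib

open scoped NNReal Classical

namespace IRTA

/-- A timestamp is a finite sequence of non-negative reals. -/
abbrev Timestamp : Type := List ℝ≥0

/-- A timed word is a finite sequence of (delay, letter) pairs. -/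
abbrev TimedWord (A : Type) : Type := List (ℝ≥0 × A)

/-- Fractional part of a non-negative real. -/
noncomputable def fracPart (x : ℝ≥0) : ℝ≥0 := x - (⌊x⌋₊ : ℝ≥0)

/-- `x` is a natural-number value. -/
def IsNatVal (x : ℝ≥0) : Prop := ∃ m : ℕ, x = (m : ℝ≥0)

/-- Region equivalence `≡^K`. -/
def RegEq (K : ℕ) (x y : ℝ≥0) : Prop :=
  (⌊x⌋₊ = ⌊y⌋₊ ∧ (fracPart x = 0 ↔ fracPart y = 0)) ∨ ((K : ℝ≥0) < x ∧ (K : ℝ≥0) < y)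

/-- One step of the (greedy) clock evolution: reset whenever the value is an
integer between `0` and `K`. -/
noncomputable def resetStep (K : ℕ) (v : ℝ≥0) : ℝ≥0 :=
  if ∃ m : ℕ, m ≤ K ∧ v = (m : ℝ≥0) then 0 else v

/-- Auxiliary function computing `c^K` with accumulator `v`. -/
noncomputable def cKAux (K : ℕ) : ℝ≥0 → Timestamp → ℝ≥0
  | v, [] => v
  | v, t :: d => cKAux K (resetStep K (v + t)) d

/-- `c^K(d)`: the sum of the delays after the last integral position of `d`. -/
noncomputable def cK (K : ℕ) (d : Timestamp) : ℝ≥0 := cKAux K 0 d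

/-- `c^K` of a timed word is `c^K` of its timestamp. -/
noncomputable def cKW {A : Type} (K : ℕ) (w : TimedWord A) : ℝ≥0 :=
  cK K (w.map Prod.fst)

/-- `c^K_⊤` : `c^K` truncated at `K`. -/
noncomputable def cKTop {A : Type} (K : ℕ) (w : TimedWord A) : WithTop ℝ≥0 :=
  if cKW K w ≤ (K : ℝ≥0) then ((cKW K w : ℝ≥0) : WithTop ℝ≥0) else ⊤

/-! ### Clock constraints and one-clock timed automata -/

/-- Clock constraints `φ ::= x < m | m < x | x = m | φ ∧ φ`. -/
inductive CC : Type where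
  | lt : ℕ → CC
  | gt : ℕ → CC
  | eq : ℕ → CC
  | and : CC → CC → CC

/-- Satisfaction of a clock constraint by a clock value. -/
def CC.sat : CC → ℝ≥0 → Prop
  | .lt m, x => x < (m : ℝ≥0)
  | .gt m, x => (m : ℝ≥0) < x
  | .eq m, x => x = (m : ℝ≥0)
  | .and φ ψ, x => φ.sat x ∧ ψ.sat x

/-- The largest constant appearing in a clock constraint. -/
def CC.maxConst : CC → ℕ
  | .lt m => m
  | .gt m => m
  | .eq m => m
  | .and φ ψ => max φ.maxConst ψ.maxConst

/-- A transition of a one-clock timed automaton; `reset = true` means the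
clock is reset (the `r = 0` case). -/
structure TTrans (Q A : Type) where
  src : Q
  dst : Q
  lab : A
  guard : CC
  reset : Bool

/-- A one-clock timed automaton. -/
structure TA (A : Type) where
  Q : Type
  init : Q
  final : Set Q
  trans : Set (TTrans Q A)

/-- The automaton has finitely many states and transitions. -/
def TA.IsFinite {A : Type} (M : TA A) : Prop := Finite M.Q ∧ M.trans.Finite

/-- Runs of a one-clock timed automaton between configurations. -/
inductive Steps {A : Type} (M : TA A) : M.Q × ℝ≥0 → TimedWord A → M.Q × ℝ≥0 → Prop
  | nil (c : M.Q × ℝ≥0) : Steps M c [] c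
  | cons {q : M.Q} {ν t : ℝ≥0} {a : A} {w : TimedWord A} {c : M.Q × ℝ≥0}
      (θ : TTrans M.Q A) (hθ : θ ∈ M.trans) (hsrc : θ.src = q) (hlab : θ.lab = a)
      (hg : θ.guard.sat (ν + t))
      (hrest : Steps M (θ.dst, if θ.reset then 0 else ν + t) w c) :
      Steps M (q, ν) ((t, a) :: w) c

/-- The language of `M` from a given configuration. -/
def TA.LangFrom {A : Type} (M : TA A) (c : M.Q × ℝ≥0) : Set (TimedWord A) :=
  {w | ∃ q' : M.Q, ∃ ν' : ℝ≥0, Steps M c w (q', ν') ∧ q' ∈ M.final}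

/-- The language of `M` (from the initial configuration). -/
def TA.Lang {A : Type} (M : TA A) : Set (TimedWord A) := M.LangFrom (M.init, 0)

/-- Determinism: distinct transitions with the same source and letter have
disjoint guards. -/
def TA.Deterministic {A : Type} (M : TA A) : Prop :=
  ∀ θ₁ ∈ M.trans, ∀ θ₂ ∈ M.trans, θ₁ ≠ θ₂ → θ₁.src = θ₂.src → θ₁.lab = θ₂.lab →
    ∀ x : ℝ≥0, ¬ (θ₁.guard.sat x ∧ θ₂.guard.sat x)

/-- Completeness: every timed word admits a run from the initial configuration. -/
def TA.Complete {A : Type} (M : TA A) : Prop :=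
  ∀ w : TimedWord A, ∃ c : M.Q × ℝ≥0, Steps M (M.init, 0) w c

/-- A 1-IRTA: every resetting transition has an equality guard. -/
def TA.IsIRTA {A : Type} (M : TA A) : Prop :=
  ∀ θ ∈ M.trans, θ.reset = true → ∃ m : ℕ, θ.guard = CC.eq m

/-- Guards allowed in a strict 1-IRTA with constant `K`. -/
def StrictGuard (K : ℕ) (φ : CC) : Prop :=
  (∃ m : ℕ, φ = CC.eq m) ∨ (∃ m : ℕ, φ = CC.and (CC.gt m) (CC.lt (m + 1))) ∨ φ = CC.gt K

/-- Strictness with constant `K`: every guard is of one of the allowed forms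
and a guard is an equality iff the transition resets. -/
def TA.IsStrict {A : Type} (M : TA A) (K : ℕ) : Prop :=
  ∀ θ ∈ M.trans, StrictGuard K θ.guard ∧ ((∃ m : ℕ, θ.guard = CC.eq m) ↔ θ.reset = true)

/-- All constants appearing in guards are at most `K`. -/
def TA.MaxConstLE {A : Type} (M : TA A) (K : ℕ) : Prop :=
  ∀ θ ∈ M.trans, θ.guard.maxConst ≤ K

/-- `M` reaches the same control state on reading `u` and `v` from the initial
configuration. -/
def TA.SameState {A : Type} (M : TA A) (u v : TimedWord A) : Prop :=
  ∃ q : M.Q, ∃ ν ν' : ℝ≥0, Steps M (M.init, 0) u (q, ν) ∧ Steps M (M.init, 0) v (q, ν')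

/-- A `K`-acceptor. -/
def IsKAcceptor {A : Type} (M : TA A) (K : ℕ) : Prop :=
  M.IsFinite ∧ M.Complete ∧ M.Deterministic ∧ M.IsIRTA ∧ M.IsStrict K ∧ M.MaxConstLE K ∧
    ∀ u v : TimedWord A, M.SameState u v → RegEq K (cKW K u) (cKW K v)

/-! ### Equivalences on timed words -/

/-- `L`-preservation of a relation on timed words. -/
def LPreserving {A : Type} (L : Set (TimedWord A)) (r : TimedWord A → TimedWord A → Prop) :
    Prop :=
  ∀ u v : TimedWord A, r u v → (u ∈ L ↔ v ∈ L)

/-- `K`-monotonicity of a relation on timed words. -/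
def KMonotonic {A : Type} (K : ℕ) (r : TimedWord A → TimedWord A → Prop) : Prop :=
  ∀ u v : TimedWord A, r u v →
    RegEq K (cKW K u) (cKW K v) ∧
      ∀ (a : A) (t t' : ℝ≥0), RegEq K (cKW K u + t) (cKW K v + t') →
        r (u ++ [(t, a)]) (v ++ [(t', a)])

/-- Finite index: there are finitely many classes `{v | r u v}`. -/
def FiniteIndex {A : Type} (r : TimedWord A → TimedWord A → Prop) : Prop :=
  Set.Finite (Set.range fun u : TimedWord A => {v : TimedWord A | r u v})

/-! ### The rescaling maps -/

/-- The bijection `f_{λ→λ'}` of the open unit interval. -/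
noncomputable def fScale (lam lam' t : ℝ≥0) : ℝ≥0 :=
  if t ≤ lam then (lam' / lam) * t else lam' + ((1 - lam') / (1 - lam)) * (t - lam)

/-- The new delay `t'` computed from the current clock values `y, y'` and delay `t`. -/
noncomputable def tauStep (K : ℕ) (y y' t : ℝ≥0) : ℝ≥0 :=
  if (IsNatVal y ∧ IsNatVal y') ∨ ((K : ℝ≥0) < y ∧ (K : ℝ≥0) < y') then t
  else (⌊t⌋₊ : ℝ≥0) + fScale (1 - fracPart y) (1 - fracPart y') (fracPart t)

/-- Auxiliary rescaling map on timestamps, carrying the current clock values. -/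
noncomputable def tauAux (K : ℕ) : ℝ≥0 → ℝ≥0 → Timestamp → Timestamp
  | _, _, [] => []
  | y, y', t :: d =>
      tauStep K y y' t ::
        tauAux K (resetStep K (y + t)) (resetStep K (y' + tauStep K y y' t)) d

/-- The rescaling map `τ_{x→x'}` on timestamps. -/
noncomputable def tau (K : ℕ) (x x' : ℝ≥0) (d : Timestamp) : Timestamp :=
  tauAux K (resetStep K x) (resetStep K x') d

/-- Auxiliary rescaling map on timed words. -/
noncomputable def tauWAux {A : Type} (K : ℕ) : ℝ≥0 → ℝ≥0 → TimedWord A → TimedWord A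
  | _, _, [] => []
  | y, y', (t, a) :: w =>
      (tauStep K y y' t, a) ::
        tauWAux K (resetStep K (y + t)) (resetStep K (y' + tauStep K y y' t)) w

/-- The rescaling map `τ_{x→x'}` on timed words. -/
noncomputable def tauW {A : Type} (K : ℕ) (x x' : ℝ≥0) (w : TimedWord A) : TimedWord A :=
  tauWAux K (resetStep K x) (resetStep K x') w

/-! ### Residuals and the syntactic equivalence -/

/-- The residual language `u^{-1}L`. -/
def residual {A : Type} (L : Set (TimedWord A)) (u : TimedWord A) : Set (TimedWord A) :=
  {w : TimedWord A | u ++ w ∈ L}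

/-- The syntactic equivalence `≈^{L,K}`. -/
def ApproxLK {A : Type} (L : Set (TimedWord A)) (K : ℕ) (u v : TimedWord A) : Prop :=
  RegEq K (cKW K u) (cKW K v) ∧
    (tauW K (cKW K u) (cKW K v)) '' (residual L u) = residual L v

/-! ### The automaton built from a monotonic equivalence -/

/-- The region guard `φ([t])`. -/
noncomputable def phiOf (K : ℕ) (t : ℝ≥0) : CC :=
  if t ≤ (K : ℝ≥0) then
    (if IsNatVal t then CC.eq ⌊t⌋₊ else CC.and (CC.gt ⌊t⌋₊) (CC.lt (⌊t⌋₊ + 1)))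
  else CC.gt K

/-- The automaton `A_≈` built from an equivalence `s` on timed words. -/
noncomputable def Aapprox {A : Type} (L : Set (TimedWord A)) (K : ℕ)
    (s : Setoid (TimedWord A)) : TA A where
  Q := Quotient s
  init := Quotient.mk s ([] : TimedWord A)
  final := {q : Quotient s | ∃ u : TimedWord A, q = Quotient.mk s u ∧ u ∈ L}
  trans := {θ : TTrans (Quotient s) A |
    ∃ (u : TimedWord A) (a : A) (t : ℝ≥0),
      θ.src = Quotient.mk s u ∧ θ.dst = Quotient.mk s (u ++ [(t, a)]) ∧ θ.lab = a ∧
      θ.guard = phiOf K (cKW K u + t) ∧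
      (θ.reset = true ↔ ∃ m : ℕ, m ≤ K ∧ cKW K u + t = (m : ℝ≥0))}

/-! ### Half-integral and small words -/

/-- Every delay has fractional part `0` or `1/2`. -/
def HalfIntegral {A : Type} (w : TimedWord A) : Prop :=
  ∀ p ∈ w, fracPart p.1 = 0 ∨ fracPart p.1 = 1 / 2

/-- Every delay is `< K + 1`. -/
def SmallWord {A : Type} (K : ℕ) (w : TimedWord A) : Prop :=
  ∀ p ∈ w, p.1 < (K : ℝ≥0) + 1

/-- The delays of `Σ_K`: half-integral values `≤ K + 1/2`. -/
def IsSigmaK (K : ℕ) (t : ℝ≥0) : Prop :=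
  (fracPart t = 0 ∨ fracPart t = 1 / 2) ∧ t ≤ (K : ℝ≥0) + 1 / 2

/-- Words over `Σ_K` (small half-integral words). -/
def SigmaWord {A : Type} (K : ℕ) (w : TimedWord A) : Prop :=
  ∀ p ∈ w, IsSigmaK K p.1



/-! ### `K`-acceptors with their region representatives -/

/-- A `K`-acceptor bundled with the half-integral representative of the
unique region of each state. -/
structure KAcc (A : Type) (K : ℕ) where
  M : TA A
  acc : IsKAcceptor M K
  reg : M.Q → ℝ≥0
  regHalf : ∀ q : M.Q, fracPart (reg q) = 0 ∨ fracPart (reg q) = 1 / 2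
  regLe : ∀ q : M.Q, reg q ≤ (K : ℝ≥0) + 1 / 2
  regSpec : ∀ (w : TimedWord A) (q : M.Q) (x : ℝ≥0),
    Steps M (M.init, 0) w (q, x) → RegEq K x (reg q)

/-- The minimization equivalences `∼^i` on the states of a `K`-acceptor. -/
def simEq {A : Type} {K : ℕ} (B : KAcc A K) : ℕ → B.M.Q → B.M.Q → Prop
  | 0, p, q => B.reg p = B.reg q ∧ (p ∈ B.M.final ↔ q ∈ B.M.final)
  | i + 1, p, q => simEq B i p q ∧
      ∀ (t : ℝ≥0) (a : A), IsSigmaK K t →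
        ∀ θ₁ θ₂ : TTrans B.M.Q A, θ₁ ∈ B.M.trans → θ₂ ∈ B.M.trans →
          θ₁.src = p → θ₂.src = q → θ₁.lab = a → θ₂.lab = a →
          θ₁.guard = phiOf K t → θ₂.guard = phiOf K t →
          simEq B i θ₁.dst θ₂.dst

/-- The quotient automaton `B/∼^m`. -/
noncomputable def quotTA {A : Type} {K : ℕ} (B : KAcc A K) (m : ℕ) : TA A where
  Q := Quot (simEq B m)
  init := Quot.mk (simEq B m) B.M.init
  final := {c : Quot (simEq B m) | ∃ q ∈ B.M.final, c = Quot.mk (simEq B m) q}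
  trans := {θ : TTrans (Quot (simEq B m)) A |
    ∃ θ₀ ∈ B.M.trans,
      θ.src = Quot.mk (simEq B m) θ₀.src ∧ θ.dst = Quot.mk (simEq B m) θ₀.dst ∧
      θ.lab = θ₀.lab ∧ θ.guard = θ₀.guard ∧ θ.reset = θ₀.reset}

/-! ### Observation tables -/

/-- An observation table over `Σ_K`. -/
structure ObsTable (A : Type) (K : ℕ) where
  U1 : Set (TimedWord A)
  E : Set (TimedWord A)
  val : TimedWord A → TimedWord A → Bool
  U1fin : U1.Finite
  Efin : E.Finite
  U1sigma : ∀ u ∈ U1, SigmaWord K u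
  Esigma : ∀ e ∈ E, SigmaWord K e
  epsU1 : ([] : TimedWord A) ∈ U1
  prefixClosed : ∀ (u : TimedWord A) (x : ℝ≥0 × A), u ++ [x] ∈ U1 → u ∈ U1
  epsE : ([] : TimedWord A) ∈ E
  suffixClosed : ∀ (x : ℝ≥0 × A) (e : TimedWord A), x :: e ∈ E → e ∈ E

/-- The set `U2` of one-letter `Σ_K`-extensions of `U1`. -/
def obsU2 {A : Type} {K : ℕ} (T : ObsTable A K) : Set (TimedWord A) :=
  {w : TimedWord A | ∃ u ∈ T.U1, ∃ (t : ℝ≥0) (a : A), IsSigmaK K t ∧ w = u ++ [(t, a)]}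

/-- `R(u)`: the row of `u` (restricted to `E`) together with `c^K_⊤(u)`. -/
noncomputable def Rof {A : Type} {K : ℕ} (T : ObsTable A K) (u : TimedWord A) :
    ({e : TimedWord A // e ∈ T.E} → Bool) × WithTop ℝ≥0 :=
  (fun e => T.val u e.1, cKTop K u)

/-- The table is closed. -/
def ObsTable.Closed {A : Type} {K : ℕ} (T : ObsTable A K) : Prop :=
  ∀ w ∈ obsU2 T, ∃ u ∈ T.U1, Rof T w = Rof T u

/-- The table is consistent. -/
def ObsTable.Consistent {A : Type} {K : ℕ} (T : ObsTable A K) : Prop :=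
  ∀ u ∈ T.U1, ∀ w ∈ T.U1, Rof T u = Rof T w →
    ∀ (t : ℝ≥0) (a : A), IsSigmaK K t → Rof T (u ++ [(t, a)]) = Rof T (w ++ [(t, a)])

/-- The automaton `A_𝒯` induced by a (closed and consistent) observation table. -/
noncomputable def ATable {A : Type} {K : ℕ} (T : ObsTable A K) : TA A where
  Q := {f : ({e : TimedWord A // e ∈ T.E} → Bool) × WithTop ℝ≥0 // ∃ u ∈ T.U1, f = Rof T u}
  init := ⟨Rof T [], ⟨[], T.epsU1, rfl⟩⟩
  final := {q | ∃ u ∈ T.U1, q.1 = Rof T u ∧ T.val u [] = true}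
  trans := {θ | ∃ u ∈ T.U1, ∃ (t : ℝ≥0) (a : A), IsSigmaK K t ∧
      θ.src.1 = Rof T u ∧ θ.dst.1 = Rof T (u ++ [(t, a)]) ∧ θ.lab = a ∧
      θ.guard = phiOf K (cKW K u + t) ∧
      (θ.reset = true ↔ ∃ m : ℕ, m ≤ K ∧ cKW K u + t = (m : ℝ≥0))}

/-- A `K`-acceptor is consistent with the observation table `𝒯`. -/
def ConsistentWith {A : Type} {K : ℕ} (M : TA A) (T : ObsTable A K) : Prop :=
  ∀ w : TimedWord A, (w ∈ T.U1 ∨ w ∈ obsU2 T) → ∀ e ∈ T.E,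
    ∀ (q : M.Q) (ν : ℝ≥0), Steps M (M.init, 0) (w ++ e) (q, ν) →
      (q ∈ M.final ↔ T.val w e = true)

/-- Isomorphism of one-clock timed automata. -/
structure TAIso {A : Type} (M N : TA A) where
  toEquiv : M.Q ≃ N.Q
  init_eq : toEquiv M.init = N.init
  final_iff : ∀ q : M.Q, q ∈ M.final ↔ toEquiv q ∈ N.final
  trans_iff : ∀ θ : TTrans M.Q A,
    θ ∈ M.trans ↔
      (⟨toEquiv θ.src, toEquiv θ.dst, θ.lab, θ.guard, θ.reset⟩ : TTrans N.Q A) ∈ N.trans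

/-! If the clock values `x = c^K(u)` and `x' = c^K(v)` are both integral or both above `K`, the
first delay is kept. Otherwise `x = m + α` and `x' = m + α'` with `α, α' ∈ (0, 1)`, and the delay
`n + β` becomes `n + f(β)` for the increasing bijection `f` of `[0, 1)` sending `1 - α` to `1 - α'`;
so `α + β` and `α' + f(β)` lie on the same side of `1`, which is region equivalence of the new
clock values. As the first delay is transformed injectively and `τ` acts letter by letter,
`τ_{u→v}` maps the words of `u⁻¹L` starting with `(t_u·a)` onto those of `v⁻¹L` starting with
`(t'_v·a)`, the tails being related by `τ_{u1→v2}`. -/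

open Function

section FracPart

lemma natCast_floor_add_fracPart (x : ℝ≥0) : (⌊x⌋₊ : ℝ≥0) + fracPart x = x :=
  add_tsub_cancel_of_le (Nat.floor_le zero_le)

lemma fracPart_lt_one (x : ℝ≥0) : fracPart x < 1 := by
  rw [fracPart, tsub_lt_iff_left (Nat.floor_le zero_le)]
  exact Nat.lt_floor_add_one x

lemma fracPart_of_lt_one {s : ℝ≥0} (hs : s < 1) : fracPart s = s := by
  rw [fracPart, Nat.floor_eq_zero.2 hs, Nat.cast_zero, tsub_zero]

lemma fracPart_eq_zero_iff {x : ℝ≥0} : fracPart x = 0 ↔ IsNatVal x := by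
  refine ⟨fun hx => ⟨⌊x⌋₊, ?_⟩, fun ⟨m, hm⟩ => ?_⟩
  · rw [← natCast_floor_add_fracPart x, hx, add_zero, Nat.floor_natCast]
  · rw [fracPart, hm, Nat.floor_natCast, tsub_self]

lemma floor_natCast_add (n : ℕ) (s : ℝ≥0) : ⌊(n : ℝ≥0) + s⌋₊ = n + ⌊s⌋₊ := by
  rw [add_comm, Nat.floor_add_natCast zero_le, add_comm]

lemma fracPart_natCast_add (n : ℕ) (s : ℝ≥0) : fracPart ((n : ℝ≥0) + s) = fracPart s := by
  rw [fracPart, floor_natCast_add, Nat.cast_add, add_tsub_add_eq_tsub_left, fracPart]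

lemma floor_eq_ite_of_lt_two {s : ℝ≥0} (hs : s < 2) : ⌊s⌋₊ = if s < 1 then 0 else 1 := by
  split_ifs with h
  · exact Nat.floor_eq_zero.2 h
  · rw [Nat.floor_eq_iff zero_le, Nat.cast_one, one_add_one_eq_two]
    exact ⟨not_lt.1 h, hs⟩

lemma fracPart_eq_zero_iff_of_lt_two {s : ℝ≥0} (hs0 : 0 < s) (hs : s < 2) :
    fracPart s = 0 ↔ s = 1 := by
  rw [fracPart_eq_zero_iff]
  refine ⟨fun ⟨m, hm⟩ => ?_, fun h => ⟨1, by rw [h, Nat.cast_one]⟩⟩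
  subst hm
  have : 0 < m ∧ m < 2 := ⟨by exact_mod_cast hs0, by exact_mod_cast hs⟩
  rw [show m = 1 by omega, Nat.cast_one]

lemma regEq_natCast_add_of_lt_two {K k : ℕ} {s s' : ℝ≥0} (hs0 : 0 < s) (hs0' : 0 < s')
    (hs : s < 2) (hs' : s' < 2) (hlt : s < 1 ↔ s' < 1) (heq : s = 1 ↔ s' = 1) :
    RegEq K ((k : ℝ≥0) + s) ((k : ℝ≥0) + s') := by
  left
  rw [floor_natCast_add, floor_natCast_add, fracPart_natCast_add, fracPart_natCast_add,
    floor_eq_ite_of_lt_two hs, floor_eq_ite_of_lt_two hs',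
    fracPart_eq_zero_iff_of_lt_two hs0 hs, fracPart_eq_zero_iff_of_lt_two hs0' hs']
  exact ⟨by simp only [hlt], heq⟩

lemma natCast_add_inj_of_lt_one {n₁ n₂ : ℕ} {s₁ s₂ : ℝ≥0} (h₁ : s₁ < 1) (h₂ : s₂ < 1)
    (h : (n₁ : ℝ≥0) + s₁ = n₂ + s₂) : n₁ = n₂ ∧ s₁ = s₂ := by
  have hfl := congrArg Nat.floor h
  have hfr := congrArg fracPart h
  rw [floor_natCast_add, floor_natCast_add, Nat.floor_eq_zero.2 h₁, Nat.floor_eq_zero.2 h₂] at hfl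
  rw [fracPart_natCast_add, fracPart_natCast_add, fracPart_of_lt_one h₁,
    fracPart_of_lt_one h₂] at hfr
  exact ⟨by simpa using hfl, hfr⟩

end FracPart

section RegEq

variable {K : ℕ}

lemma regEq_refl (K : ℕ) (x : ℝ≥0) : RegEq K x x := Or.inl ⟨rfl, Iff.rfl⟩

lemma RegEq.symm {x y : ℝ≥0} (h : RegEq K x y) : RegEq K y x :=
  h.imp (fun ⟨hfl, hfr⟩ => ⟨hfl.symm, hfr.symm⟩) And.symm

lemma resetStep_zero (K : ℕ) : resetStep K 0 = 0 := by
  rw [resetStep]; split_ifs <;> rfl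

lemma resetStep_idem (K : ℕ) (v : ℝ≥0) : resetStep K (resetStep K v) = resetStep K v := by
  by_cases hv : ∃ m : ℕ, m ≤ K ∧ v = (m : ℝ≥0)
  · rw [show resetStep K v = 0 from if_pos hv, resetStep_zero]
  · have hv' : resetStep K v = v := if_neg hv
    rw [hv', hv']

lemma RegEq.eq_natCast {m : ℕ} {z : ℝ≥0} (hm : m ≤ K) (h : RegEq K m z) : z = m := by
  rcases h with ⟨hfl, hfr⟩ | ⟨hK, -⟩
  · rw [← natCast_floor_add_fracPart z, hfr.1 (fracPart_eq_zero_iff.2 ⟨m, rfl⟩), add_zero, ← hfl,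
      Nat.floor_natCast]
  · exact absurd hK (not_lt.2 (by exact_mod_cast hm))

lemma regEq_resetStep {z z' : ℝ≥0} (h : RegEq K z z') :
    RegEq K (resetStep K z) (resetStep K z') := by
  have reset_eq : ∀ {z z' : ℝ≥0}, RegEq K z z' → (∃ m : ℕ, m ≤ K ∧ z = (m : ℝ≥0)) →
      resetStep K z = resetStep K z' := by
    rintro z z' h ⟨m, hm, rfl⟩
    rw [h.eq_natCast hm]
  by_cases hz : ∃ m : ℕ, m ≤ K ∧ z = (m : ℝ≥0)
  · rw [reset_eq h hz]; exact regEq_refl K _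
  by_cases hz' : ∃ m : ℕ, m ≤ K ∧ z' = (m : ℝ≥0)
  · rw [← reset_eq h.symm hz']; exact regEq_refl K _
  rwa [resetStep, if_neg hz, resetStep, if_neg hz']

end RegEq

section FScale

variable {lam lam' : ℝ≥0}

lemma fScale_self (h0 : 0 < lam) : fScale lam lam' lam = lam' := by
  rw [fScale, if_pos le_rfl, div_mul_cancel₀ _ h0.ne']

lemma fScale_one (h1 : lam < 1) (h1' : lam' ≤ 1) : fScale lam lam' 1 = 1 := by
  rw [fScale, if_neg (not_le.2 h1), div_mul_cancel₀ _ (tsub_pos_of_lt h1).ne',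
    add_tsub_cancel_of_le h1']

lemma fScale_strictMono (h0 : 0 < lam) (h1 : lam < 1) (h0' : 0 < lam') (h1' : lam' < 1) :
    StrictMono (fScale lam lam') := by
  have hslope : 0 < (1 - lam') / (1 - lam) := div_pos (tsub_pos_of_lt h1') (tsub_pos_of_lt h1)
  intro a b hab
  unfold fScale
  split_ifs with ha hb hb
  · exact mul_lt_mul_of_pos_left hab (div_pos h0' h0)
  · calc lam' / lam * a ≤ lam' / lam * lam := mul_le_mul_of_nonneg_left ha zero_le
      _ = lam' := div_mul_cancel₀ _ h0.ne'
      _ < _ := lt_add_of_pos_right _ (mul_pos hslope (tsub_pos_of_lt (not_le.1 hb)))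
  · exact absurd (hab.trans_le hb) (not_lt.2 (not_le.1 ha).le)
  · exact add_lt_add_right (mul_lt_mul_of_pos_left
      (tsub_lt_tsub_right_of_le (not_le.1 ha).le hab) hslope) _

end FScale

section TauStep

variable {K : ℕ} {x x' : ℝ≥0}

def IsTrivialPair (K : ℕ) (x x' : ℝ≥0) : Prop :=
  (IsNatVal x ∧ IsNatVal x') ∨ ((K : ℝ≥0) < x ∧ (K : ℝ≥0) < x')

lemma tauStep_of_isTrivialPair (h : IsTrivialPair K x x') (t : ℝ≥0) : tauStep K x x' t = t :=
  if_pos h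

lemma tauStep_of_not_isTrivialPair (h : ¬ IsTrivialPair K x x') (t : ℝ≥0) :
    tauStep K x x' t = ⌊t⌋₊ + fScale (1 - fracPart x) (1 - fracPart x') (fracPart t) :=
  if_neg h

lemma RegEq.floor_eq_and_fracPart_pos (h : RegEq K x x') (hc : ¬ IsTrivialPair K x x') :
    ⌊x⌋₊ = ⌊x'⌋₊ ∧ 0 < fracPart x ∧ 0 < fracPart x' := by
  rcases h with ⟨hfl, hfr⟩ | hK
  · refine ⟨hfl, pos_iff_ne_zero.2 fun h0 => hc ?_, pos_iff_ne_zero.2 fun h0 => hc ?_⟩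
    · exact Or.inl ⟨fracPart_eq_zero_iff.1 h0, fracPart_eq_zero_iff.1 (hfr.1 h0)⟩
    · exact Or.inl ⟨fracPart_eq_zero_iff.1 (hfr.2 h0), fracPart_eq_zero_iff.1 h0⟩
  · exact absurd (Or.inr hK) hc

lemma one_sub_fracPart_pos (x : ℝ≥0) : 0 < 1 - fracPart x :=
  tsub_pos_of_lt (fracPart_lt_one x)

lemma one_sub_fracPart_lt_one {x : ℝ≥0} (hx : 0 < fracPart x) : 1 - fracPart x < 1 :=
  tsub_lt_self one_pos hx

lemma fScale_fracPart_strictMono (hx : 0 < fracPart x) (hx' : 0 < fracPart x') :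
    StrictMono (fScale (1 - fracPart x) (1 - fracPart x')) :=
  fScale_strictMono (one_sub_fracPart_pos x) (one_sub_fracPart_lt_one hx)
    (one_sub_fracPart_pos x') (one_sub_fracPart_lt_one hx')

lemma fScale_fracPart_lt_one (hx : 0 < fracPart x) (hx' : 0 < fracPart x') (t : ℝ≥0) :
    fScale (1 - fracPart x) (1 - fracPart x') (fracPart t) < 1 := by
  calc _ < fScale (1 - fracPart x) (1 - fracPart x') 1 :=
        fScale_fracPart_strictMono hx hx' (fracPart_lt_one t)
    _ = 1 := fScale_one (one_sub_fracPart_lt_one hx) tsub_le_self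

lemma regEq_add_tauStep (h : RegEq K x x') (t : ℝ≥0) :
    RegEq K (x + t) (x' + tauStep K x x' t) := by
  by_cases hc : IsTrivialPair K x x'
  · rw [tauStep_of_isTrivialPair hc]
    have above : (K : ℝ≥0) < x → (K : ℝ≥0) < x' → RegEq K (x + t) (x' + t) := fun hK hK' =>
      Or.inr ⟨hK.trans_le le_self_add, hK'.trans_le le_self_add⟩
    rcases h with ⟨hfl, -⟩ | ⟨hK, hK'⟩
    · rcases hc with ⟨⟨m, rfl⟩, ⟨m', rfl⟩⟩ | ⟨hK, hK'⟩
      · obtain rfl : m = m' := by simpa using hfl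
        exact regEq_refl K _
      · exact above hK hK'
    · exact above hK hK'
  obtain ⟨hfl, hα, hα'⟩ := h.floor_eq_and_fracPart_pos hc
  have hf := fScale_fracPart_strictMono hα hα'
  have hβ' := fScale_fracPart_lt_one hα hα' t
  set β' := fScale (1 - fracPart x) (1 - fracPart x') (fracPart t)
  have hft : fScale (1 - fracPart x) (1 - fracPart x') (1 - fracPart x) = 1 - fracPart x' :=
    fScale_self (one_sub_fracPart_pos x)
  have e : x + t = ((⌊x⌋₊ + ⌊t⌋₊ : ℕ) : ℝ≥0) + (fracPart x + fracPart t) := by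
    rw [Nat.cast_add, add_add_add_comm, natCast_floor_add_fracPart, natCast_floor_add_fracPart]
  have e' : x' + (⌊t⌋₊ + β') = ((⌊x⌋₊ + ⌊t⌋₊ : ℕ) : ℝ≥0) + (fracPart x' + β') := by
    rw [hfl, Nat.cast_add, add_add_add_comm, natCast_floor_add_fracPart]
  rw [tauStep_of_not_isTrivialPair hc, e, e']
  refine regEq_natCast_add_of_lt_two (add_pos_of_pos_of_nonneg hα zero_le)
    (add_pos_of_pos_of_nonneg hα' zero_le) ?_ ?_ ?_ ?_
  · exact (add_lt_add (fracPart_lt_one x) (fracPart_lt_one t)).trans_eq one_add_one_eq_two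
  · exact (add_lt_add (fracPart_lt_one x') hβ').trans_eq one_add_one_eq_two
  · rw [← lt_tsub_iff_left, ← lt_tsub_iff_left, ← hf.lt_iff_lt, hft]
  · rw [add_comm, add_comm _ β', ← eq_tsub_iff_add_eq_of_le (fracPart_lt_one x).le,
      ← eq_tsub_iff_add_eq_of_le (fracPart_lt_one x').le, ← hf.injective.eq_iff, hft]

lemma tauStep_injective (h : RegEq K x x') : Injective (tauStep K x x') := by
  by_cases hc : IsTrivialPair K x x'
  · rw [show tauStep K x x' = id from funext (tauStep_of_isTrivialPair hc)]
    exact injective_id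
  obtain ⟨-, hα, hα'⟩ := h.floor_eq_and_fracPart_pos hc
  have hf := (fScale_fracPart_strictMono hα hα').injective
  intro t₁ t₂ ht
  rw [tauStep_of_not_isTrivialPair hc, tauStep_of_not_isTrivialPair hc] at ht
  obtain ⟨hfl, hfr⟩ := natCast_add_inj_of_lt_one (fScale_fracPart_lt_one hα hα' t₁)
    (fScale_fracPart_lt_one hα hα' t₂) ht
  rw [← natCast_floor_add_fracPart t₁, ← natCast_floor_add_fracPart t₂, hfl, hf hfr]

end TauStep

section Words

variable {A : Type} {K : ℕ}

lemma cKAux_append_singleton (K : ℕ) (d : Timestamp) (t : ℝ≥0) :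
    ∀ v : ℝ≥0, cKAux K v (d ++ [t]) = resetStep K (cKAux K v d + t) := by
  induction d with
  | nil => intro v; rfl
  | cons s d ih => intro v; rw [List.cons_append, cKAux, cKAux, ih]

lemma cKW_append_singleton (K : ℕ) (w : TimedWord A) (p : ℝ≥0 × A) :
    cKW K (w ++ [p]) = resetStep K (cKW K w + p.1) := by
  rw [cKW, cKW, List.map_append]
  exact cKAux_append_singleton K _ p.1 0

lemma resetStep_cKW (K : ℕ) (w : TimedWord A) : resetStep K (cKW K w) = cKW K w := by
  induction w using List.reverseRecOn with
  | nil => exact resetStep_zero K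
  | append_singleton w p _ => rw [cKW_append_singleton, resetStep_idem]

lemma tau_singleton {x x' : ℝ≥0} (hx : resetStep K x = x) (hx' : resetStep K x' = x')
    (t : ℝ≥0) : tau K x x' [t] = [tauStep K x x' t] := by
  rw [tau, hx, hx', tauAux, tauAux]

lemma tauW_cons {x x' : ℝ≥0} (hx : resetStep K x = x) (hx' : resetStep K x' = x')
    (p : ℝ≥0 × A) (w : TimedWord A) :
    tauW K x x' (p :: w) = (tauStep K x x' p.1, p.2) ::
      tauW K (resetStep K (x + p.1)) (resetStep K (x' + tauStep K x x' p.1)) w := by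
  rw [tauW, hx, hx', tauWAux, tauW, resetStep_idem, resetStep_idem]

lemma residual_append_singleton (L : Set (TimedWord A)) (u : TimedWord A) (p : ℝ≥0 × A) :
    residual L (u ++ [p]) = {w | p :: w ∈ residual L u} := by
  ext w
  simp [residual]

end Words

lemma image_setOf_cons_mem {α β : Type*} {F : List α → List β} {g : α → β}
    {G : α → List α → List β} (hnil : F [] = []) (hcons : ∀ p w, F (p :: w) = g p :: G p w)
    (hg : Injective g) {S : Set (List α)} (p : α) :
    G p '' {w | p :: w ∈ S} = {w | g p :: w ∈ F '' S} := by
  ext w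
  constructor
  · rintro ⟨w₀, hw₀, rfl⟩
    exact ⟨p :: w₀, hw₀, hcons p w₀⟩
  · rintro ⟨_ | ⟨q, w₀⟩, hz, hzw⟩
    · exact absurd (hnil ▸ hzw) (List.cons_ne_nil _ _).symm
    · rw [hcons, List.cons_eq_cons] at hzw
      obtain rfl := hg hzw.1
      exact ⟨w₀, hz, hzw.2⟩

theorem statement9_general {A : Type} (L : Set (TimedWord A)) (K : ℕ)
    (u v : TimedWord A) (h : ApproxLK L K u v) (a : A) (tu tv' : ℝ≥0)
    (ht : tau K (cKW K u) (cKW K v) [tu] = [tv']) :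
    RegEq K (cKW K (u ++ [(tu, a)])) (cKW K (v ++ [(tv', a)])) ∧
      (tauW K (cKW K (u ++ [(tu, a)])) (cKW K (v ++ [(tv', a)]))) ''
          (residual L (u ++ [(tu, a)])) = residual L (v ++ [(tv', a)]) := by
  obtain ⟨hreg, himg⟩ := h
  have hu := resetStep_cKW K u
  have hv := resetStep_cKW K v
  obtain rfl : tauStep K (cKW K u) (cKW K v) tu = tv' := by
    rw [tau_singleton hu hv] at ht
    exact List.singleton_injective ht
  rw [cKW_append_singleton, cKW_append_singleton, residual_append_singleton,
    residual_append_singleton, ← himg]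
  exact ⟨regEq_resetStep (regEq_add_tauStep hreg tu),
    image_setOf_cons_mem rfl (tauW_cons hu hv) ((tauStep_injective hreg).prodMap injective_id) _⟩

/-- one-step extension of `u` and its rescaled extension of `v`
remain `≈^{L,K}`-equivalent. -/
theorem statement9 {A : Type} [Finite A] (L : Set (TimedWord A)) (K : ℕ)
    (u v : TimedWord A) (h : ApproxLK L K u v) (a : A) (tu tv' : ℝ≥0)
    (ht : tau K (cKW K u) (cKW K v) [tu] = [tv']) :
    RegEq K (cKW K (u ++ [(tu, a)])) (cKW K (v ++ [(tv', a)])) ∧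
      (tauW K (cKW K (u ++ [(tu, a)])) (cKW K (v ++ [(tv', a)]))) ''
          (residual L (u ++ [(tu, a)])) = residual L (v ++ [(tv', a)]) :=
  statement9_general L K u v h a tu tv' ht

end IRTA
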